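/- Let C be an n × n matrix over ℂ that is diagonalizable with eigenvalues λ₁, …, λₙ, and let M(t) be a k × k matrix with entries in ℂ[t, t⁻¹]. Form the kn × kn matrix M_C(t) obtained from M(t) by replacing each entry p(t) = Σ aᵢ tⁱ with the n × n block Σ aᵢ (tC)ⁱ. Then det M_C(t) = ∏_{j=1}^{n} det M(t λⱼ). -/

import Mathlib

/-!
Write `C = P D P⁻¹` with `D = diagonal λ`. Every integer power of `C` is then `P Dᵐ P⁻¹`,
so over `ℂ[t,t⁻¹]` we get `M_C(t) = (1 ⊗ P) · blockDiagonal (j ↦ M(t λⱼ)) · (1 ⊗ P⁻¹)`: the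
`j`-th diagonal block replaces each entry `Σ aₘ tᵐ` of `M` by `Σ aₘ λⱼᵐ tᵐ`. Conjugation
preserves the determinant, and a block-diagonal determinant is the product of the determinants
of its blocks.
-/

open Matrix LaurentPolynomial

/-- Substitution `t ↦ c·t` in a Laurent polynomial: `Σ aₘ tᵐ ↦ Σ aₘ cᵐ tᵐ`. -/
noncomputable def laurentScale (c : ℂ) (p : LaurentPolynomial ℂ) :
    LaurentPolynomial ℂ :=
  p.coeff.sum fun m a => LaurentPolynomial.C (a * c ^ m) * T m

namespace LaurentPolynomial

variable {R : Type*}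

/-- `laurentScale c` is definitionally `twist (c ^ ·)`. -/
noncomputable def twist [Semiring R] (w : ℤ → R) (p : R[T;T⁻¹]) : R[T;T⁻¹] :=
  p.coeff.sum fun m a => C (a * w m) * T m

theorem twist_sum_mul_mul [CommSemiring R] {κ : Type*} [Fintype κ] (x y : κ → R)
    (w : κ → ℤ → R) (p : R[T;T⁻¹]) :
    twist (fun m => ∑ j, x j * w j m * y j) p = ∑ j, C (x j) * twist (w j) p * C (y j) := by
  simp only [twist, Finsupp.sum, Finset.mul_sum, Finset.sum_mul, map_sum]
  rw [Finset.sum_comm]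
  refine Finset.sum_congr rfl fun j _ => Finset.sum_congr rfl fun m _ => ?_
  simp only [_root_.map_mul]
  ring

end LaurentPolynomial

namespace Matrix

open Kronecker

variable {R ι κ : Type*} [Fintype ι] [DecidableEq ι] [Fintype κ] [DecidableEq κ]

theorem mul_diagonal_mul_apply [CommSemiring R] (A B : Matrix κ κ R) (d : κ → R) (i k : κ) :
    (A * diagonal d * B) i k = ∑ j, A i j * d j * B j k := by
  simp [mul_apply, diagonal_apply, mul_ite]

theorem coe_unit_zpow_conj_diagonal [Field R] {P : Matrix κ κ R} (hP : IsUnit P) {d : κ → R}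
    (hC : IsUnit (P * diagonal d * P⁻¹)) (m : ℤ) :
    ((hC.unit ^ m : (Matrix κ κ R)ˣ) : Matrix κ κ R) = P * diagonal (fun j => d j ^ m) * P⁻¹ := by
  have hd : IsUnit d := isUnit_diagonal.mp <| (isUnit_iff_isUnit_det _).mpr <|
    det_conj hP (diagonal d) ▸ (isUnit_iff_isUnit_det _).mp hC
  have hconj : hC.unit =
      hP.unit * Units.map (diagonalRingHom κ R : (κ → R) →* _) hd.unit * hP.unit⁻¹ := by
    ext1
    simp [coe_units_inv]
  rw [hconj, conj_zpow, ← map_zpow]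
  simp only [Units.val_mul, Units.coe_map, Units.val_zpow_eq_zpow_val, IsUnit.unit_spec,
    coe_units_inv]
  rfl

theorem of_twist_conj_diagonal_eq [CommRing R] (M : Matrix ι ι R[T;T⁻¹]) (P Q : Matrix κ κ R)
    (w : κ → ℤ → R) :
    (of fun p q : ι × κ =>
        twist (fun m => (P * diagonal (fun j => w j m) * Q) p.2 q.2) (M p.1 q.1)) =
      (1 ⊗ₖ P.map C) * blockDiagonal (fun j => M.map (twist (w j))) * (1 ⊗ₖ Q.map C) := by
  ext ⟨p₁, p₂⟩ ⟨q₁, q₂⟩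
  simp only [of_apply, mul_diagonal_mul_apply, twist_sum_mul_mul]
  simp [mul_apply, Fintype.sum_prod_type, one_apply, blockDiagonal_apply, ite_mul, mul_ite]

theorem det_of_twist_conj_diagonal [CommRing R] (M : Matrix ι ι R[T;T⁻¹]) {P : Matrix κ κ R}
    (hP : IsUnit P) (w : κ → ℤ → R) :
    det (of fun p q : ι × κ =>
        twist (fun m => (P * diagonal (fun j => w j m) * P⁻¹) p.2 q.2) (M p.1 q.1)) =
      ∏ j, det (M.map (twist (w j))) := by
  have hdet := (isUnit_iff_isUnit_det P).mp hP
  have kronecker_map_C {A B : Matrix κ κ R} (h : A * B = 1) :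
      (1 ⊗ₖ A.map C : Matrix (ι × κ) (ι × κ) R[T;T⁻¹]) * (1 ⊗ₖ B.map C) = 1 := by
    rw [← mul_kronecker_mul, Matrix.one_mul, ← Matrix.map_mul, h,
      Matrix.map_one _ (map_zero _) (map_one _), one_kronecker_one]
  rw [of_twist_conj_diagonal_eq, det_conj_of_mul_eq_one (kronecker_map_C (mul_nonsing_inv P hdet))
    (kronecker_map_C (nonsing_inv_mul P hdet)), det_blockDiagonal]

end Matrix

/-- Let `C` be diagonalizable with eigenvalues `λ₁, …, λₙ` (and invertible, so
that negative powers make sense) and `M(t)` a `k × k` matrix over `ℂ[t,t⁻¹]`.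
The `kn × kn` matrix `M_C(t)`, obtained by replacing each entry `Σ aₘ tᵐ` by
the block `Σ aₘ (tC)ᵐ`, satisfies `det M_C(t) = ∏ⱼ det M(t λⱼ)`. -/
theorem stmt12 {n k : ℕ} (C P : Matrix (Fin n) (Fin n) ℂ) (lam : Fin n → ℂ)
    (hP : IsUnit P) (hdiag : C = P * Matrix.diagonal lam * P⁻¹)
    (hC : IsUnit C)
    (M : Matrix (Fin k) (Fin k) (LaurentPolynomial ℂ)) :
    Matrix.det (Matrix.of fun p q : Fin k × Fin n =>
        (M p.1 q.1).coeff.sum fun m a =>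
          LaurentPolynomial.C
            (a * (((hC.unit ^ m : (Matrix (Fin n) (Fin n) ℂ)ˣ) :
              Matrix (Fin n) (Fin n) ℂ) p.2 q.2)) * T m) =
      ∏ j : Fin n,
        Matrix.det (Matrix.of fun p q : Fin k => laurentScale (lam j) (M p q)) := by
  subst hdiag
  simp only [coe_unit_zpow_conj_diagonal hP hC]
  exact det_of_twist_conj_diagonal M hP fun j m => lam j ^ m
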